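/- For the shift σ on 𝒳 = [0,1]^ℤ with metric d(x,y) = Σ_{m∈ℤ} 2^{-|m|}|x_m - y_m|, one has for every ε ∈ (0,1) and n ≥ 1: (1 + ⌊1/ε⌋)^n ≤ #(𝒳, d_n, ε) ≤ (1 + ⌊12/ε⌋)^{n + 2⌈log₂(4/ε)⌉ + 1}, where d_n(x,y) = max_{0≤k<n} d(σ^k x, σ^k y). Consequently, the metric mean dimension mdim_M([0,1]^ℤ, σ, d) = lim_{ε→0} S(𝒳,σ,d,ε)/|log ε| equals 1. -/

import Mathlib

/-! Lower bound: the `(1 + ⌊1/ε⌋)^n` points whose coordinates `0, …, n-1` lie on the grid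
`{0, ε, 2ε, …} ∩ [0,1]` are pairwise `ε`-separated for `d_n`, because `d_n` dominates each of these
coordinates, so no set of `d_n`-diameter `< ε` contains two of them.

Upper bound: the weights `2^{-|m|}` sum to `3`, and those outside `[-M, M]` to `2 * 2^{-M}`. Hence two
points whose coordinates in `[-M, n - 1 + M]` differ by less than `3/(2K)` are `d_n`-closer than `ε`
as soon as `K ≥ 9/ε` and `2^M ≥ 4/ε`; rounding those `n + 2M + 1` coordinates to the grid
`{0, 1/K, …, 1}` with `K = ⌊12/ε⌋` yields the cover.

Both bounds make `S(𝒳, σ, d, ε)` equal to `|log ε| + O(1)`, whence the mean dimension `1`. -/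

open Real Filter Set Topology
open scoped NNReal

/-- Minimal cardinality of a cover of `𝒳` by open sets of `ρ`-diameter less than `ε`. -/
noncomputable def coverNum (𝒳 : Type*) [TopologicalSpace 𝒳] (ρ : 𝒳 → 𝒳 → ℝ) (ε : ℝ) : ℕ :=
  sInf {N : ℕ | ∃ U : Fin N → Set 𝒳, (∀ i, IsOpen (U i)) ∧ (∀ x, ∃ i, x ∈ U i) ∧
    ∀ i, ∀ x ∈ U i, ∀ y ∈ U i, ρ x y < ε}

abbrev Cube : Type := ℤ → Set.Icc (0 : ℝ) 1

noncomputable def dCube (x y : Cube) : ℝ :=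
  ∑' m : ℤ, (2 : ℝ) ^ (-|m|) * |(x m : ℝ) - (y m : ℝ)|

def shiftCube (x : Cube) : Cube := fun m => x (m + 1)

/-- `d_n(x,y) = max_{0 ≤ k < n} d(σ^k x, σ^k y)` for the shift `σ` on `[0,1]^ℤ`. -/
noncomputable def dnCube (n : ℕ) (x y : Cube) : ℝ :=
  (((Finset.range n).sup fun k =>
    Real.toNNReal (dCube (shiftCube^[k] x) (shiftCube^[k] y))) : ℝ≥0)

section Cover

variable {𝒳 : Type*} [TopologicalSpace 𝒳] {ρ : 𝒳 → 𝒳 → ℝ} {ε : ℝ}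

def IsSmallOpenCover (ρ : 𝒳 → 𝒳 → ℝ) (ε : ℝ) {ι : Type*} (U : ι → Set 𝒳) : Prop :=
  (∀ i, IsOpen (U i)) ∧ (∀ x, ∃ i, x ∈ U i) ∧ ∀ i, ∀ x ∈ U i, ∀ y ∈ U i, ρ x y < ε

lemma IsSmallOpenCover.comp_equiv {ι κ : Type*} {U : ι → Set 𝒳} (hU : IsSmallOpenCover ρ ε U)
    (e : κ ≃ ι) : IsSmallOpenCover ρ ε (U ∘ e) := by
  obtain ⟨hopen, hcov, hsmall⟩ := hU
  refine ⟨fun k => hopen (e k), fun x => ?_, fun k => hsmall (e k)⟩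
  obtain ⟨i, hi⟩ := hcov x
  exact ⟨e.symm i, by simpa using hi⟩

lemma coverNum_le_card {ι : Type*} [Fintype ι] {U : ι → Set 𝒳}
    (hU : IsSmallOpenCover ρ ε U) : coverNum 𝒳 ρ ε ≤ Fintype.card ι :=
  Nat.sInf_le ⟨_, hU.comp_equiv (Fintype.equivFin ι).symm⟩

lemma exists_isSmallOpenCover_fin_coverNum {ι : Type*} [Fintype ι] {U : ι → Set 𝒳}
    (hU : IsSmallOpenCover ρ ε U) :
    ∃ V : Fin (coverNum 𝒳 ρ ε) → Set 𝒳, IsSmallOpenCover ρ ε V :=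
  Nat.sInf_mem (s := {N | ∃ V : Fin N → Set 𝒳, IsSmallOpenCover ρ ε V})
    ⟨_, _, hU.comp_equiv (Fintype.equivFin ι).symm⟩

lemma IsSmallOpenCover.card_le_of_pairwise_le {ι κ : Type*} [Fintype ι] [Fintype κ]
    {U : ι → Set 𝒳} (hU : IsSmallOpenCover ρ ε U) {p : κ → 𝒳}
    (hp : Pairwise fun k l => ε ≤ ρ (p k) (p l)) : Fintype.card κ ≤ Fintype.card ι := by
  choose φ hφ using fun k => hU.2.1 (p k)
  refine Fintype.card_le_of_injective φ fun k l hkl => by_contra fun hne => ?_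
  exact (hU.2.2 _ _ (hφ k) _ (hkl ▸ hφ l)).not_ge (hp hne)

lemma card_le_coverNum {ι κ : Type*} [Fintype ι] [Fintype κ] {U : ι → Set 𝒳}
    (hU : IsSmallOpenCover ρ ε U) {p : κ → 𝒳} (hp : Pairwise fun k l => ε ≤ ρ (p k) (p l)) :
    Fintype.card κ ≤ coverNum 𝒳 ρ ε := by
  obtain ⟨V, hV⟩ := exists_isSmallOpenCover_fin_coverNum hU
  simpa using hV.card_le_of_pairwise_le hp

end Cover

section Weights

lemma two_zpow_neg_abs_natCast (n : ℕ) : (2 : ℝ) ^ (-|(n : ℤ)|) = (1 / 2) ^ n := by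
  rw [Int.abs_natCast, zpow_neg, zpow_natCast, one_div, inv_pow]

lemma two_zpow_neg_abs_neg_add_one (n : ℕ) :
    (2 : ℝ) ^ (-|-((n : ℤ) + 1)|) = 1 / 2 * (1 / 2) ^ n := by
  rw [abs_neg, ← Nat.cast_succ, two_zpow_neg_abs_natCast, pow_succ, mul_comm]

lemma hasSum_two_zpow_neg_abs : HasSum (fun m : ℤ => (2 : ℝ) ^ (-|m|)) 3 := by
  have hpos : HasSum (fun n : ℕ => (2 : ℝ) ^ (-|(n : ℤ)|)) 2 := by
    simp_rw [two_zpow_neg_abs_natCast]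
    exact hasSum_geometric_two
  have hneg : HasSum (fun n : ℕ => (2 : ℝ) ^ (-|-((n : ℤ) + 1)|)) 1 := by
    have h := hasSum_geometric_two.mul_left (1 / 2 : ℝ)
    rw [one_div_mul_cancel two_ne_zero] at h
    simp_rw [two_zpow_neg_abs_neg_add_one]
    exact h
  have h := HasSum.of_nat_of_neg_add_one (f := fun m : ℤ => (2 : ℝ) ^ (-|m|)) hpos hneg
  rwa [show (2 : ℝ) + 1 = 3 by norm_num] at h

lemma sum_Icc_two_zpow_neg_abs (M : ℕ) :
    ∑ m ∈ Finset.Icc (-(M : ℤ)) M, (2 : ℝ) ^ (-|m|) = 3 - 2 * 2 ^ (-(M : ℤ)) := by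
  induction M with
  | zero => norm_num
  | succ M ih =>
    have hIcc : Finset.Icc (-((M + 1 : ℕ) : ℤ)) (M + 1 : ℕ)
        = insert (-((M : ℤ) + 1)) (insert ((M : ℤ) + 1) (Finset.Icc (-(M : ℤ)) M)) := by
      ext m
      simp only [Finset.mem_insert, Finset.mem_Icc]
      omega
    rw [hIcc, Finset.sum_insert (by simp; omega), Finset.sum_insert (by simp), ih, abs_neg,
      abs_of_nonneg (by positivity), neg_add, zpow_add₀ two_ne_zero, Nat.cast_succ, neg_add,
      zpow_add₀ two_ne_zero]
    ring

lemma tsum_compl_Icc_two_zpow_neg_abs (M : ℕ) :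
    ∑' m : ↑(↑(Finset.Icc (-(M : ℤ)) M) : Set ℤ)ᶜ, (2 : ℝ) ^ (-|(m : ℤ)|)
      = 2 * 2 ^ (-(M : ℤ)) := by
  have h := hasSum_two_zpow_neg_abs.summable.sum_add_tsum_compl (s := Finset.Icc (-(M : ℤ)) M)
  rw [hasSum_two_zpow_neg_abs.tsum_eq, sum_Icc_two_zpow_neg_abs] at h
  linarith

end Weights

section CubeMetric

lemma abs_coord_sub_le_one (x y : Cube) (m : ℤ) : |(x m : ℝ) - y m| ≤ 1 := by
  simpa using abs_sub_le_of_le_of_le (x m).2.1 (x m).2.2 (y m).2.1 (y m).2.2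

lemma weighted_abs_coord_sub_le (x y : Cube) (m : ℤ) :
    (2 : ℝ) ^ (-|m|) * |(x m : ℝ) - y m| ≤ (2 : ℝ) ^ (-|m|) :=
  mul_le_of_le_one_right (by positivity) (abs_coord_sub_le_one x y m)

lemma summable_dCube (x y : Cube) :
    Summable fun m : ℤ => (2 : ℝ) ^ (-|m|) * |(x m : ℝ) - y m| :=
  hasSum_two_zpow_neg_abs.summable.of_nonneg_of_le (fun _ => by positivity)
    (weighted_abs_coord_sub_le x y)

lemma dCube_nonneg (x y : Cube) : 0 ≤ dCube x y :=
  tsum_nonneg fun _ => by positivity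

lemma weighted_abs_coord_sub_le_dCube (x y : Cube) (m : ℤ) :
    (2 : ℝ) ^ (-|m|) * |(x m : ℝ) - y m| ≤ dCube x y :=
  (summable_dCube x y).le_tsum m fun _ _ => by positivity

lemma dCube_lt_of_abs_coord_sub_lt {x y : Cube} {M : ℕ} {δ : ℝ}
    (hδ : ∀ m, -(M : ℤ) ≤ m → m ≤ M → |(x m : ℝ) - y m| < δ) :
    dCube x y < 3 * δ + 2 * 2 ^ (-(M : ℤ)) := by
  set W := Finset.Icc (-(M : ℤ)) M
  have hδ0 : 0 < δ := (abs_nonneg _).trans_lt (hδ 0 (by omega) (by omega))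
  have hwindow : ∑ m ∈ W, (2 : ℝ) ^ (-|m|) * |(x m : ℝ) - y m| < 3 * δ := by
    calc ∑ m ∈ W, (2 : ℝ) ^ (-|m|) * |(x m : ℝ) - y m|
        ≤ ∑ m ∈ W, (2 : ℝ) ^ (-|m|) * δ := by
          refine Finset.sum_le_sum fun m hm => ?_
          rw [Finset.mem_Icc] at hm
          exact mul_le_mul_of_nonneg_left (hδ m hm.1 hm.2).le (by positivity)
      _ = (3 - 2 * 2 ^ (-(M : ℤ))) * δ := by rw [← Finset.sum_mul, sum_Icc_two_zpow_neg_abs]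
      _ < 3 * δ := by nlinarith [zpow_pos (two_pos (α := ℝ)) (-(M : ℤ))]
  have htail : ∑' m : ↑(↑W : Set ℤ)ᶜ, (2 : ℝ) ^ (-|(m : ℤ)|) * |(x m : ℝ) - y m|
      ≤ 2 * 2 ^ (-(M : ℤ)) := by
    rw [← tsum_compl_Icc_two_zpow_neg_abs]
    exact (summable_dCube x y).subtype _ |>.tsum_le_tsum
      (fun m => weighted_abs_coord_sub_le x y m) (hasSum_two_zpow_neg_abs.summable.subtype _)
  rw [dCube, ← (summable_dCube x y).sum_add_tsum_compl (s := W)]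
  linarith

lemma shiftCube_iterate_apply (k : ℕ) (x : Cube) (m : ℤ) : shiftCube^[k] x m = x (m + k) := by
  induction k generalizing x with
  | zero => simp
  | succ k ih =>
    rw [Function.iterate_succ_apply, ih, shiftCube]
    congr 1
    push_cast
    ring

lemma dCube_iterate_le_dnCube {n k : ℕ} (hk : k < n) (x y : Cube) :
    dCube (shiftCube^[k] x) (shiftCube^[k] y) ≤ dnCube n x y := by
  have h := Finset.le_sup (f := fun j => (dCube (shiftCube^[j] x) (shiftCube^[j] y)).toNNReal)
    (Finset.mem_range.2 hk)
  rw [← Real.coe_toNNReal _ (dCube_nonneg _ _)]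
  exact_mod_cast h

lemma dnCube_lt_of_forall {n : ℕ} {x y : Cube} {ε : ℝ} (hε : 0 < ε)
    (h : ∀ k < n, dCube (shiftCube^[k] x) (shiftCube^[k] y) < ε) : dnCube n x y < ε := by
  rw [dnCube, ← Real.coe_toNNReal _ hε.le, NNReal.coe_lt_coe, Finset.sup_lt_iff (by simpa)]
  exact fun k hk => (Real.toNNReal_lt_toNNReal_iff hε).2 (h k (Finset.mem_range.1 hk))

lemma abs_coord_sub_le_dnCube {n k : ℕ} (hk : k < n) (x y : Cube) :
    |(x k : ℝ) - y k| ≤ dnCube n x y := by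
  have h := weighted_abs_coord_sub_le_dCube (shiftCube^[k] x) (shiftCube^[k] y) 0
  simp only [shiftCube_iterate_apply, abs_zero, neg_zero, zpow_zero, one_mul, zero_add] at h
  exact h.trans (dCube_iterate_le_dnCube hk x y)

end CubeMetric

section UpperBound

lemma le_pow_natCeil_logb {b x : ℝ} (hb : 1 < b) (hx : 0 < x) : x ≤ b ^ ⌈logb b x⌉₊ := by
  rw [← Real.rpow_natCast, ← Real.logb_le_iff_le_rpow hb hx]
  exact Nat.le_ceil _

lemma div_le_natFloor_twelve_div {ε : ℝ} (hε : 0 < ε) (hε3 : ε ≤ 3) : 9 / ε ≤ ⌊12 / ε⌋₊ := by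
  have h := Nat.sub_one_lt_floor (12 / ε)
  have h3 : 1 ≤ 3 / ε := (one_le_div hε).2 hε3
  have : 12 / ε = 9 / ε + 3 / ε := by ring
  linarith

lemma exists_abs_sub_div_le {w : ℝ} (hw : w ∈ Icc (0 : ℝ) 1) {K : ℕ} (hK : 0 < K) :
    ∃ c : Fin (K + 1), |w - (c : ℕ) / K| ≤ 1 / (2 * K) := by
  have hK' : (0 : ℝ) < K := Nat.cast_pos.2 hK
  set c := ⌊w * K + 1 / 2⌋₊
  have hc₁ : (c : ℝ) ≤ w * K + 1 / 2 := Nat.floor_le (by nlinarith [hw.1])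
  have hc₂ : w * K + 1 / 2 < c + 1 := Nat.lt_floor_add_one _
  have hcK : c < K + 1 := by
    rw [← Nat.cast_lt (α := ℝ)]
    push_cast
    nlinarith [hw.2]
  refine ⟨⟨c, hcK⟩, ?_⟩
  rw [show w - c / K = (w * K - c) / K by field_simp, abs_div, abs_of_pos hK',
    div_le_div_iff₀ hK' (by positivity)]
  have : |w * K - c| ≤ 1 / 2 := abs_le.2 ⟨by linarith, by linarith⟩
  nlinarith

/-- The tolerance `3/(4K)` exceeds the rounding error `1/(2K)`, so these open cells still cover. -/
def gridCell (K M L : ℕ) (c : Fin L → Fin (K + 1)) : Set Cube :=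
  {x | ∀ j : Fin L, |(x ((j : ℤ) - M) : ℝ) - (c j : ℕ) / K| < 3 / (4 * K)}

lemma isOpen_gridCell (K M L : ℕ) (c : Fin L → Fin (K + 1)) : IsOpen (gridCell K M L c) := by
  simp only [gridCell, ofPred_forall]
  refine isOpen_iInter_of_finite fun j => isOpen_lt ?_ continuous_const
  fun_prop

lemma exists_mem_gridCell {K : ℕ} (hK : 0 < K) (M L : ℕ) (x : Cube) :
    ∃ c, x ∈ gridCell K M L c := by
  choose c hc using fun j : Fin L => exists_abs_sub_div_le (x ((j : ℤ) - M)).2 hK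
  refine ⟨c, fun j => (hc j).trans_lt ?_⟩
  have hK' : (0 : ℝ) < K := Nat.cast_pos.2 hK
  rw [div_lt_div_iff₀ (by positivity) (by positivity)]
  nlinarith

lemma abs_coord_sub_lt_of_mem_gridCell {K M L : ℕ} {c : Fin L → Fin (K + 1)} {x y : Cube}
    (hx : x ∈ gridCell K M L c) (hy : y ∈ gridCell K M L c) {m : ℤ} (hm₀ : -(M : ℤ) ≤ m)
    (hmL : m + M < L) : |(x m : ℝ) - y m| < 3 / (2 * K) := by
  set j : Fin L := ⟨(m + M).toNat, by omega⟩
  have hj : (j : ℤ) - M = m := by simp only [j]; omega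
  have hxj := hx j
  have hyj := hy j
  rw [hj] at hxj hyj
  calc |(x m : ℝ) - y m| ≤ |(x m : ℝ) - (c j : ℕ) / K| + |(y m : ℝ) - (c j : ℕ) / K| := by
        simpa only [abs_sub_comm (y m : ℝ)] using abs_sub_le (x m : ℝ) ((c j : ℕ) / K) (y m)
    _ < 3 / (4 * K) + 3 / (4 * K) := add_lt_add hxj hyj
    _ = 3 / (2 * K) := by ring

lemma dnCube_lt_of_mem_gridCell {ε : ℝ} (hε : 0 < ε) {K M n : ℕ} (hK : 9 / ε ≤ K)
    (hM : 4 / ε ≤ 2 ^ M) {c : Fin (n + 2 * M + 1) → Fin (K + 1)} {x y : Cube}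
    (hx : x ∈ gridCell K M _ c) (hy : y ∈ gridCell K M _ c) : dnCube n x y < ε := by
  have hK' : (0 : ℝ) < K := (by positivity : (0 : ℝ) < 9 / ε).trans_le hK
  refine dnCube_lt_of_forall hε fun k hk => ?_
  have hwindow : ∀ m, -(M : ℤ) ≤ m → m ≤ M →
      |((shiftCube^[k] x) m : ℝ) - (shiftCube^[k] y) m| < 3 / (2 * K) := fun m hm₀ hm₁ => by
    simp only [shiftCube_iterate_apply]
    exact abs_coord_sub_lt_of_mem_gridCell hx hy (by omega) (by push_cast; omega)
  have hKε : 3 * (3 / (2 * K)) ≤ ε / 2 := by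
    rw [div_le_iff₀ hε] at hK
    rw [← mul_div_assoc, div_le_div_iff₀ (by positivity) two_pos]
    nlinarith
  have hMε : 2 * (2 : ℝ) ^ (-(M : ℤ)) ≤ ε / 2 := by
    rw [zpow_neg, zpow_natCast, ← div_eq_mul_inv, div_le_div_iff₀ (by positivity) two_pos]
    rw [div_le_iff₀ hε] at hM
    linarith
  linarith [dCube_lt_of_abs_coord_sub_lt hwindow]

lemma isSmallOpenCover_gridCell {ε : ℝ} (hε : 0 < ε) {K M : ℕ} (hK : 9 / ε ≤ K)
    (hM : 4 / ε ≤ 2 ^ M) (n : ℕ) :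
    IsSmallOpenCover (dnCube n) ε (gridCell K M (n + 2 * M + 1)) :=
  ⟨isOpen_gridCell K M _,
    exists_mem_gridCell (Nat.cast_pos.1 ((by positivity : (0 : ℝ) < 9 / ε).trans_le hK)) M _,
    fun _ _ hx _ hy => dnCube_lt_of_mem_gridCell hε hK hM hx hy⟩

lemma isSmallOpenCover_gridCell_of_lt_one {ε : ℝ} (hε : 0 < ε) (hε1 : ε < 1) (n : ℕ) :
    IsSmallOpenCover (dnCube n) ε
      (gridCell ⌊12 / ε⌋₊ ⌈logb 2 (4 / ε)⌉₊ (n + 2 * ⌈logb 2 (4 / ε)⌉₊ + 1)) :=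
  isSmallOpenCover_gridCell hε (div_le_natFloor_twelve_div hε (by linarith))
    (le_pow_natCeil_logb one_lt_two (by positivity)) n

lemma coverNum_le {ε : ℝ} (hε : 0 < ε) (hε1 : ε < 1) (n : ℕ) :
    coverNum Cube (dnCube n) ε ≤ (1 + ⌊12 / ε⌋₊) ^ (n + 2 * ⌈logb 2 (4 / ε)⌉₊ + 1) := by
  simpa [add_comm 1] using coverNum_le_card (isSmallOpenCover_gridCell_of_lt_one hε hε1 n)

end UpperBound

section LowerBound

/-- Only positions `0, …, n-1` matter; through `Int.toNat` the negative ones also read `v 0`. -/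
noncomputable def cubeOfFin {n : ℕ} (v : Fin n → ℝ) : Cube := fun m =>
  projIcc 0 1 zero_le_one (if h : m.toNat < n then v ⟨m.toNat, h⟩ else 0)

lemma cubeOfFin_apply {n : ℕ} {v : Fin n → ℝ} {k : Fin n} (hv : v k ∈ Icc (0 : ℝ) 1) :
    (cubeOfFin v (k : ℕ) : ℝ) = v k := by
  simp [cubeOfFin, projIcc_of_mem _ hv]

lemma abs_sub_le_dnCube_cubeOfFin {n : ℕ} {v w : Fin n → ℝ} (k : Fin n)
    (hv : v k ∈ Icc (0 : ℝ) 1) (hw : w k ∈ Icc (0 : ℝ) 1) :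
    |v k - w k| ≤ dnCube n (cubeOfFin v) (cubeOfFin w) := by
  have h := abs_coord_sub_le_dnCube k.2 (cubeOfFin v) (cubeOfFin w)
  rwa [cubeOfFin_apply hv, cubeOfFin_apply hw] at h

lemma natCast_mul_mem_Icc {ε : ℝ} (hε : 0 < ε) {c : ℕ} (hc : c < 1 + ⌊1 / ε⌋₊) :
    (c : ℝ) * ε ∈ Icc (0 : ℝ) 1 := by
  refine ⟨by positivity, ?_⟩
  have hc' : (c : ℝ) ≤ 1 / ε := (Nat.cast_le.2 (by omega)).trans (Nat.floor_le (by positivity))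
  rwa [le_div_iff₀ hε] at hc'

lemma le_coverNum {ε : ℝ} (hε : 0 < ε) (hε1 : ε < 1) (n : ℕ) :
    (1 + ⌊1 / ε⌋₊) ^ n ≤ coverNum Cube (dnCube n) ε := by
  set p : (Fin n → Fin (1 + ⌊1 / ε⌋₊)) → Cube := fun f => cubeOfFin fun k => (f k : ℕ) * ε
  have hsep : Pairwise fun f g => ε ≤ dnCube n (p f) (p g) := by
    intro f g hfg
    obtain ⟨k, hk⟩ := Function.ne_iff.1 hfg
    refine le_trans ?_ (abs_sub_le_dnCube_cubeOfFin k (natCast_mul_mem_Icc hε (f k).2)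
      (natCast_mul_mem_Icc hε (g k).2))
    have hne : ((f k : ℕ) : ℤ) ≠ (g k : ℕ) := by exact_mod_cast Fin.val_ne_of_ne hk
    have h1 : (1 : ℝ) ≤ |((f k : ℕ) : ℝ) - (g k : ℕ)| := by
      exact_mod_cast Int.one_le_abs (sub_ne_zero.2 hne)
    rw [← sub_mul, abs_mul, abs_of_pos hε]
    nlinarith
  simpa using card_le_coverNum (isSmallOpenCover_gridCell_of_lt_one hε hε1 n) hsep

end LowerBound

section MeanDimension

lemma limsup_log_div_mem_Icc {N : ℕ → ℕ} {K₁ K₂ C : ℕ} (hK₁ : 0 < K₁)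
    (hlow : ∀ n, K₁ ^ n ≤ N n) (hup : ∀ n, N n ≤ K₂ ^ (n + C)) :
    log K₁ ≤ atTop.limsup (fun n : ℕ => log (N n) / n) ∧
      atTop.limsup (fun n : ℕ => log (N n) / n) ≤ log K₂ := by
  have hN : ∀ n, (0 : ℝ) < N n := fun n => Nat.cast_pos.2 ((pow_pos hK₁ n).trans_le (hlow n))
  have hA : ∀ᶠ n : ℕ in atTop, log K₁ ≤ log (N n) / n := by
    filter_upwards [eventually_gt_atTop 0] with n hn
    rw [le_div_iff₀ (by positivity), mul_comm, ← Real.log_pow]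
    exact Real.log_le_log (by positivity) (by exact_mod_cast hlow n)
  have hB : ∀ᶠ n : ℕ in atTop, log (N n) / n ≤ (1 + C / n) * log K₂ := by
    filter_upwards [eventually_gt_atTop 0] with n hn
    have hn' : (0 : ℝ) < n := Nat.cast_pos.2 hn
    rw [div_le_iff₀ hn', show (1 + C / n) * log K₂ * n = (n + C : ℕ) * log K₂ by
      push_cast; field_simp, ← Real.log_pow]
    exact Real.log_le_log (hN n) (by exact_mod_cast hup n)
  have hlim : Tendsto (fun n : ℕ => (1 + C / n) * log K₂) atTop (𝓝 (log K₂)) := by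
    simpa using ((tendsto_const_div_atTop_nhds_zero_nat (C : ℝ)).const_add 1).mul_const (log K₂)
  have hbdd := hlim.isBoundedUnder_le.mono_le hB
  exact ⟨le_limsup_of_frequently_le hA.frequently hbdd,
    (limsup_le_limsup hB (isBoundedUnder_of_eventually_ge hA).isCoboundedUnder_le
      hlim.isBoundedUnder_le).trans_eq hlim.limsup_eq⟩

lemma tendsto_div_abs_log_of_abs_log_le {S : ℝ → ℝ} {c : ℝ}
    (hlow : ∀ᶠ ε in 𝓝[>] 0, |log ε| ≤ S ε) (hup : ∀ᶠ ε in 𝓝[>] 0, S ε ≤ |log ε| + c) :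
    Tendsto (fun ε => S ε / |log ε|) (𝓝[>] 0) (𝓝 1) := by
  have habs : Tendsto (fun ε => |log ε|) (𝓝[>] 0) atTop :=
    tendsto_abs_atBot_atTop.comp tendsto_log_nhdsGT_zero
  have hupper : Tendsto (fun ε => 1 + c / |log ε|) (𝓝[>] 0) (𝓝 1) := by
    simpa using (tendsto_const_nhds.div_atTop habs).const_add 1
  refine tendsto_of_tendsto_of_tendsto_of_le_of_le' tendsto_const_nhds hupper ?_ ?_
  · filter_upwards [hlow, habs.eventually_gt_atTop 0] with ε h hε
    rwa [le_div_iff₀ hε, one_mul]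
  · filter_upwards [hup, habs.eventually_gt_atTop 0] with ε h hε
    rwa [div_le_iff₀ hε, add_mul, one_mul, div_mul_cancel₀ _ hε.ne']

lemma abs_log_le_log_one_add_natFloor_inv {ε : ℝ} (hε : 0 < ε) (hε1 : ε < 1) :
    |log ε| ≤ log ((1 + ⌊1 / ε⌋₊ : ℕ) : ℝ) := by
  rw [abs_of_neg (log_neg hε hε1), ← log_inv, ← one_div]
  refine log_le_log (by positivity) ?_
  push_cast
  linarith [Nat.lt_floor_add_one (1 / ε)]

lemma log_one_add_natFloor_div_le {a ε : ℝ} (ha : 0 ≤ a) (hε : 0 < ε) (hε1 : ε < 1) :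
    log ((1 + ⌊a / ε⌋₊ : ℕ) : ℝ) ≤ |log ε| + log (1 + a) := by
  have hfloor : ((1 + ⌊a / ε⌋₊ : ℕ) : ℝ) ≤ (1 + a) / ε := by
    push_cast
    have h1 : 1 ≤ 1 / ε := by rw [le_div_iff₀ hε]; linarith
    linarith [Nat.floor_le (by positivity : 0 ≤ a / ε), add_div 1 a ε]
  calc log ((1 + ⌊a / ε⌋₊ : ℕ) : ℝ) ≤ log ((1 + a) / ε) := log_le_log (by positivity) hfloor
    _ = |log ε| + log (1 + a) := by
      rw [log_div (by positivity) hε.ne', abs_of_neg (log_neg hε hε1)]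
      ring

end MeanDimension

/-- For the shift on `([0,1]^ℤ, d)`, for every `0 < ε < 1` and `n ≥ 1`,
`(1 + ⌊1/ε⌋)^n ≤ #(𝒳, d_n, ε) ≤ (1 + ⌊12/ε⌋)^{n + 2⌈log₂(4/ε)⌉ + 1}`; consequently the
metric mean dimension `lim_{ε→0} S(𝒳,σ,d,ε)/|log ε|` equals `1`. -/
theorem cube_metric_mean_dimension :
    (∀ ε : ℝ, 0 < ε → ε < 1 → ∀ n : ℕ, 1 ≤ n →
      (1 + ⌊1 / ε⌋₊) ^ n ≤ coverNum Cube (dnCube n) ε ∧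
      coverNum Cube (dnCube n) ε
        ≤ (1 + ⌊12 / ε⌋₊) ^ (n + 2 * ⌈Real.logb 2 (4 / ε)⌉₊ + 1)) ∧
    Tendsto
      (fun ε : ℝ =>
        (Filter.atTop.limsup fun n : ℕ => Real.log (coverNum Cube (dnCube n) ε) / n)
          / |Real.log ε|)
      (𝓝[>] (0 : ℝ)) (𝓝 1) := by
  refine ⟨fun ε hε hε1 n _ => ⟨le_coverNum hε hε1 n, coverNum_le hε hε1 n⟩, ?_⟩
  have hlimsup : ∀ ε ∈ Ioo (0 : ℝ) 1, _ := fun ε hε =>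
    limsup_log_div_mem_Icc (by omega) (le_coverNum hε.1 hε.2)
      fun n => (coverNum_le hε.1 hε.2 n).trans_eq (by rw [add_assoc])
  have hIoo : Ioo (0 : ℝ) 1 ∈ 𝓝[>] 0 := Ioo_mem_nhdsGT one_pos
  refine tendsto_div_abs_log_of_abs_log_le (c := log (1 + 12)) ?_ ?_
  · filter_upwards [hIoo] with ε hε
    exact (abs_log_le_log_one_add_natFloor_inv hε.1 hε.2).trans (hlimsup ε hε).1
  · filter_upwards [hIoo] with ε hε
    exact (hlimsup ε hε).2.trans (log_one_add_natFloor_div_le (by norm_num) hε.1 hε.2)
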